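/- arXiv:2504.18436 — 5 statements merged into one kernel-verified Lean document; each statement's English description precedes it below -/
import Mathlib

section
/- Let (Ω, F, P) be a probability space, G a sub-σ-algebra of F, and n ≥ 2. Define S = {(W_1,...,W_n) : each W_i is G-measurable, in L^p, and sum_i W_i = 0}. Then for Y = (Y_1,...,Y_n) with each Y_i in L^q (1/p + 1/q = 1), we have E[sum_i W_i Y_i] = 0 for all (W_1,...,W_n) in S if and only if E[Y_i | G] = E[Y_j | G] almost surely for all i, j. -/
open MeasureTheory
open scoped BigOperators ENNReal

/-!
Testing the annihilator condition against `W = 1_s • (e_i - e_j)` with `s ∈ G` gives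
`∫_s Y_i = ∫_s Y_j` for every `s ∈ G`, which characterises `E[Y_i | G] = E[Y_j | G]`.
Conversely, pulling the `G`-measurable `W_i` out of the conditional expectation,
`E[∑ W_i Y_i] = E[∑ W_i E[Y_i | G]] = E[(∑ W_i) E[Y_k | G]] = 0`.
-/

namespace MeasureTheory

variable {Ω ι : Type*} {mΩ : MeasurableSpace Ω} {μ : Measure Ω} {G : MeasurableSpace Ω}
  [Fintype ι] {p : ℝ≥0∞} {Y : ι → Ω → ℝ}

variable (μ G p) in
def AnnihilatesZeroSum (Y : ι → Ω → ℝ) : Prop :=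
  ∀ W : ι → Ω → ℝ, (∀ i, MemLp (W i) p μ) → (∀ i, StronglyMeasurable[G] (W i)) →
    (∑ i, W i) = 0 → ∫ ω, (∑ i, W i ω * Y i ω) ∂μ = 0

theorem AnnihilatesZeroSum.integral_mul_sub_eq_zero [DecidableEq ι]
    (h : AnnihilatesZeroSum μ G p Y) {w : Ω → ℝ} (hw : MemLp w p μ)
    (hwG : StronglyMeasurable[G] w) (i j : ι) :
    ∫ ω, w ω * (Y i ω - Y j ω) ∂μ = 0 := by
  let c : ι → ℝ := Pi.single i 1 - Pi.single j 1
  have hc : ∑ k, c k = 0 := by simp [c, Finset.sum_sub_distrib]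
  convert h (fun k ω => c k * w ω) (fun k => hw.const_mul (c k))
    (fun k => stronglyMeasurable_const.mul hwG) (by ext ω; simp [← Finset.sum_mul, hc]) using 2
    with ω
  simp [c, sub_mul, mul_sub, Finset.sum_sub_distrib, Pi.single_apply]

theorem AnnihilatesZeroSum.setIntegral_eq (hG : G ≤ mΩ) (h : AnnihilatesZeroSum μ G p Y)
    (hY : ∀ i, Integrable (Y i) μ) (i j : ι) {s : Set Ω} (hs : MeasurableSet[G] s)
    (hμs : μ s ≠ ∞) :
    ∫ ω in s, Y i ω ∂μ = ∫ ω in s, Y j ω ∂μ := by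
  classical
  have h0 := h.integral_mul_sub_eq_zero
    (memLp_indicator_const p (hG s hs) (1 : ℝ) (Or.inr hμs))
    (stronglyMeasurable_const.indicator hs) i j
  have hind : ∀ ω, s.indicator (fun _ => (1 : ℝ)) ω * (Y i ω - Y j ω) =
      s.indicator (fun ω => Y i ω - Y j ω) ω := fun ω => by
    by_cases hω : ω ∈ s <;> simp [hω]
  simp only [hind] at h0
  rwa [integral_indicator (hG s hs), integral_sub (hY i).integrableOn (hY j).integrableOn,
    sub_eq_zero] at h0

theorem AnnihilatesZeroSum.condExp_ae_eq (hG : G ≤ mΩ) [SigmaFinite (μ.trim hG)]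
    (h : AnnihilatesZeroSum μ G p Y) (hY : ∀ i, Integrable (Y i) μ) (i j : ι) :
    μ[Y i|G] =ᵐ[μ] μ[Y j|G] := by
  refine ae_eq_condExp_of_forall_setIntegral_eq hG (hY j)
    (fun s _ _ => integrable_condExp.integrableOn) (fun s hs hμs => ?_)
    stronglyMeasurable_condExp.aestronglyMeasurable
  rw [setIntegral_condExp hG (hY i) hs]
  exact h.setIntegral_eq hG hY i j hs hμs.ne

theorem sum_mul_ae_eq_zero_of_ae_eq {W m : ι → Ω → ℝ} (hW : ∑ i, W i = 0)
    (hm : ∀ i j, m i =ᵐ[μ] m j) : ∑ i, W i * m i =ᵐ[μ] 0 := by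
  rcases isEmpty_or_nonempty ι with hι | ⟨⟨i₀⟩⟩
  · simp
  filter_upwards [ae_all_iff.2 fun i => hm i i₀] with ω hω
  simp only [Finset.sum_apply, Pi.mul_apply, hω, ← Finset.sum_mul, Pi.zero_apply]
  simp [← Finset.sum_apply, hW]

theorem condExp_sum_mul_ae_eq {W : ι → Ω → ℝ} (hWG : ∀ i, StronglyMeasurable[G] (W i))
    (hWY : ∀ i, Integrable (W i * Y i) μ) (hY : ∀ i, Integrable (Y i) μ) :
    μ[∑ i, W i * Y i|G] =ᵐ[μ] ∑ i, W i * μ[Y i|G] :=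
  (condExp_finsetSum (fun i _ => hWY i) G).trans <| by
    filter_upwards [ae_all_iff.2 fun i =>
      condExp_mul_of_stronglyMeasurable_left (hWG i) (hWY i) (hY i)] with ω hω
    simp only [Finset.sum_apply, hω]

theorem integral_sum_mul_eq_zero_of_condExp_ae_eq (hG : G ≤ mΩ) [SigmaFinite (μ.trim hG)]
    {W : ι → Ω → ℝ} (hWG : ∀ i, StronglyMeasurable[G] (W i))
    (hWY : ∀ i, Integrable (W i * Y i) μ) (hY : ∀ i, Integrable (Y i) μ)
    (hW : ∑ i, W i = 0) (h : ∀ i j, μ[Y i|G] =ᵐ[μ] μ[Y j|G]) :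
    ∫ ω, ∑ i, W i ω * Y i ω ∂μ = 0 :=
  calc ∫ ω, ∑ i, W i ω * Y i ω ∂μ = ∫ ω, μ[∑ i, W i * Y i|G] ω ∂μ := by
        rw [integral_condExp hG]; simp only [Finset.sum_apply, Pi.mul_apply]
    _ = ∫ ω, (0 : Ω → ℝ) ω ∂μ := integral_congr_ae <|
        (condExp_sum_mul_ae_eq hWG hWY hY).trans (sum_mul_ae_eq_zero_of_ae_eq hW h)
    _ = 0 := integral_zero Ω ℝ

end MeasureTheory

theorem annihilator_iff_condexp_equal_general
    {Ω : Type*} {mΩ : MeasurableSpace Ω} (μ : Measure Ω) [IsProbabilityMeasure μ]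
    (G : MeasurableSpace Ω) (hG : G ≤ mΩ)
    (n : ℕ)
    (p q : ℝ≥0∞) (hpq : 1 / p + 1 / q = 1)
    (Y : Fin n → Ω → ℝ) (hY : ∀ i, MemLp (Y i) q μ) :
    (∀ W : Fin n → Ω → ℝ,
        (∀ i, MemLp (W i) p μ) →
        (∀ i, StronglyMeasurable[G] (W i)) →
        (∑ i, W i) = 0 →
        ∫ ω, (∑ i, W i ω * Y i ω) ∂μ = 0) ↔
      ∀ i j, μ[Y i|G] =ᵐ[μ] μ[Y j|G] := by
  have : ENNReal.HolderConjugate p q := ENNReal.holderConjugate_iff.2 (by simpa using hpq)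
  have hYint : ∀ i, Integrable (Y i) μ := fun i =>
    (hY i).integrable (ENNReal.HolderConjugate.one_le q p)
  refine ⟨fun h => AnnihilatesZeroSum.condExp_ae_eq hG h hYint, fun h W hW hWG hW0 => ?_⟩
  exact integral_sum_mul_eq_zero_of_condExp_ae_eq hG hWG
    (fun i => ((hY i).mul (hW i)).integrable le_rfl) hYint hW0 h

/-- for `Y = (Y_1,…,Y_n)` with `Y_i ∈ L^q`, the functional
`W ↦ E[∑ i, W_i Y_i]` vanishes on the subspace
`S = {(W_1,…,W_n) : W_i G-measurable, W_i ∈ L^p, ∑ i W_i = 0}`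
if and only if `E[Y_i | G] = E[Y_j | G]` a.s. for all `i, j`. -/
theorem annihilator_iff_condexp_equal
    {Ω : Type*} {mΩ : MeasurableSpace Ω} (μ : Measure Ω) [IsProbabilityMeasure μ]
    (G : MeasurableSpace Ω) (hG : G ≤ mΩ)
    (n : ℕ) (hn : 2 ≤ n)
    (p q : ℝ≥0∞) (hp : 1 ≤ p) (hp' : p ≠ ∞) (hpq : 1 / p + 1 / q = 1)
    (Y : Fin n → Ω → ℝ) (hY : ∀ i, MemLp (Y i) q μ) :
    (∀ W : Fin n → Ω → ℝ,
        (∀ i, MemLp (W i) p μ) →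
        (∀ i, StronglyMeasurable[G] (W i)) →
        (∑ i, W i) = 0 →
        ∫ ω, (∑ i, W i ω * Y i ω) ∂μ = 0) ↔
      ∀ i j, μ[Y i|G] =ᵐ[μ] μ[Y j|G] :=
  annihilator_iff_condexp_equal_general μ G hG n p q hpq Y hY
end

section
/- Let Ω be a finite probability space with probabilities p_s > 0, and for β ∈ (0,1] let D_β = {Y : Ω → R : 0 ≤ Y ≤ 1/β, E[Y] = 1}. Then the coherent risk measure r(Z) = max{E[ZY] : Y ∈ D_β} equals CVaR_β(Z) = min over η ∈ R of (η + (1/β) E[(Z - η)^+]). -/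
open scoped BigOperators
open Finset

private lemma cvar_weak_duality {Ω : Type*} [Fintype Ω]
    (p : Ω → ℝ) (hp : ∀ s, 0 ≤ p s)
    (β : ℝ) (hβ0 : 0 < β)
    (Z Y : Ω → ℝ) (h0 : ∀ s, 0 ≤ Y s) (h1 : ∀ s, Y s ≤ 1 / β)
    (hsum : ∑ s, p s * Y s = 1) (η : ℝ) :
    ∑ s, p s * (Z s * Y s) ≤ η + (1 / β) * ∑ s, p s * max (Z s - η) 0 := by
  have key : ∀ s, p s * (Z s * Y s) ≤ p s * Y s * η + (1/β) * (p s * max (Z s - η) 0) := by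
    intro s
    have h2 : (Z s - η) * Y s ≤ max (Z s - η) 0 * (1/β) := by
      rcases le_or_gt (Z s - η) 0 with h | h
      · have hn : (Z s - η) * Y s ≤ 0 := mul_nonpos_of_nonpos_of_nonneg h (h0 s)
        have : (0:ℝ) ≤ max (Z s - η) 0 * (1/β) := by positivity
        linarith
      · rw [max_eq_left h.le]
        exact mul_le_mul_of_nonneg_left (h1 s) h.le
    have h3 := mul_le_mul_of_nonneg_left h2 (hp s)
    nlinarith [h3]
  calc ∑ s, p s * (Z s * Y s)
      ≤ ∑ s, (p s * Y s * η + (1/β) * (p s * max (Z s - η) 0)) :=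
        Finset.sum_le_sum fun s _ => key s
    _ = (∑ s, p s * Y s) * η + (1/β) * ∑ s, p s * max (Z s - η) 0 := by
        rw [Finset.sum_add_distrib, ← Finset.sum_mul, ← Finset.mul_sum]
    _ = η + (1/β) * ∑ s, p s * max (Z s - η) 0 := by rw [hsum, one_mul]

/-- on a finite probability space with probabilities `p s > 0`, the
coherent risk measure with risk set `D_β = {Y : 0 ≤ Y ≤ 1/β, E[Y] = 1}` equals the
Rockafellar–Uryasev `CVaR_β`: the maximum of `E[ZY]` over `D_β` is attained and equals
the attained minimum over `η ∈ ℝ` of `η + (1/β) E[(Z − η)⁺]`. -/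
theorem cvar_dual_representation
    {Ω : Type*} [Fintype Ω] [Nonempty Ω]
    (p : Ω → ℝ) (hp : ∀ s, 0 < p s) (hpsum : ∑ s, p s = 1)
    (β : ℝ) (hβ : β ∈ Set.Ioc (0 : ℝ) 1)
    (Z : Ω → ℝ) :
    ∃ v : ℝ,
      IsGreatest {x : ℝ | ∃ Y : Ω → ℝ,
          (∀ s, 0 ≤ Y s) ∧ (∀ s, Y s ≤ 1 / β) ∧ (∑ s, p s * Y s = 1) ∧
          x = ∑ s, p s * (Z s * Y s)} v ∧
      IsLeast {x : ℝ | ∃ η : ℝ,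
          x = η + (1 / β) * ∑ s, p s * max (Z s - η) 0} v := by
  classical
  obtain ⟨hβ0, hβ1⟩ := hβ
  -- probability of exceedance / equality
  set Pgt : ℝ → ℝ := fun t => ∑ s, if t < Z s then p s else 0 with hPgt_def
  set Peq : ℝ → ℝ := fun t => ∑ s, if Z s = t then p s else 0 with hPeq_def
  -- the candidate set of quantiles
  have himg : (univ.image Z).Nonempty := (univ_nonempty).image Z
  set S : Finset ℝ := (univ.image Z).filter (fun t => Pgt t ≤ β) with hS_def
  have hSne : S.Nonempty := by
    refine ⟨(univ.image Z).max' himg, ?_⟩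
    rw [hS_def, mem_filter]
    refine ⟨(univ.image Z).max'_mem himg, ?_⟩
    have hzero : Pgt ((univ.image Z).max' himg) = 0 := by
      rw [hPgt_def]
      apply Finset.sum_eq_zero
      intro s _
      have hle : Z s ≤ (univ.image Z).max' himg :=
        (univ.image Z).le_max' _ (mem_image_of_mem Z (mem_univ s))
      simp [not_lt.mpr hle]
    rw [hzero]; exact le_of_lt hβ0
  set η : ℝ := S.min' hSne with hη_def
  have hηS : η ∈ S := S.min'_mem hSne
  have hηim : η ∈ univ.image Z := (mem_filter.mp hηS).1
  have hq : Pgt η ≤ β := (mem_filter.mp hηS).2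
  -- Peq η > 0
  obtain ⟨s₀, _, hs₀⟩ := mem_image.mp hηim
  have hPeq_pos : 0 < Peq η := by
    rw [hPeq_def]
    have : (0:ℝ) < ∑ s, if Z s = η then p s else 0 := by
      have h1 : ∀ s ∈ (univ : Finset Ω), (0:ℝ) ≤ if Z s = η then p s else 0 := by
        intro s _
        split <;> [exact (hp s).le; exact le_refl 0]
      have h2 : (if Z s₀ = η then p s₀ else 0) = p s₀ := by simp [hs₀]
      calc (0:ℝ) < p s₀ := hp s₀
        _ = (if Z s₀ = η then p s₀ else 0) := h2.symm
        _ ≤ ∑ s, if Z s = η then p s else 0 :=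
          Finset.single_le_sum h1 (mem_univ s₀)
    exact this
  -- β ≤ Pgt η + Peq η
  have hge : β ≤ Pgt η + Peq η := by
    by_cases hc : ∃ t ∈ univ.image Z, t < η
    · set T : Finset ℝ := (univ.image Z).filter (· < η) with hT_def
      have hTne : T.Nonempty := by
        obtain ⟨t, ht, htlt⟩ := hc
        exact ⟨t, by rw [hT_def, mem_filter]; exact ⟨ht, htlt⟩⟩
      set t' : ℝ := T.max' hTne with ht'_def
      have ht'T : t' ∈ T := T.max'_mem hTne
      have ht'im : t' ∈ univ.image Z := (mem_filter.mp ht'T).1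
      have ht'lt : t' < η := (mem_filter.mp ht'T).2
      have ht'nS : t' ∉ S := by
        intro hmem
        exact absurd (S.min'_le t' hmem) (not_le.mpr ht'lt)
      have hβlt : β < Pgt t' := by
        by_contra h
        exact ht'nS (by rw [hS_def, mem_filter]; exact ⟨ht'im, not_lt.mp h⟩)
      have heq : Pgt t' = Pgt η + Peq η := by
        rw [hPgt_def, hPeq_def, ← Finset.sum_add_distrib]
        apply Finset.sum_congr rfl
        intro s _
        rcases lt_trichotomy (Z s) η with h | h | h
        · have h1 : ¬ t' < Z s := by
            intro hlt
            have hZT : Z s ∈ T := by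
              rw [hT_def, mem_filter]
              exact ⟨mem_image_of_mem Z (mem_univ s), h⟩
            exact absurd (T.le_max' _ hZT) (not_le.mpr hlt)
          simp [h1, not_lt.mpr h.le, h.ne]
        · simp [h, ht'lt, lt_irrefl]
        · simp [lt_trans ht'lt h, h, h.ne']
      linarith
    · push_neg at hc
      have hall : ∀ s : Ω, η ≤ Z s := fun s =>
        hc (Z s) (mem_image_of_mem Z (mem_univ s))
      have heq : Pgt η + Peq η = 1 := by
        rw [hPgt_def, hPeq_def, ← Finset.sum_add_distrib, ← hpsum]
        apply Finset.sum_congr rfl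
        intro s _
        rcases lt_or_eq_of_le (hall s) with h | h
        · simp [h, h.ne']
        · simp [h, lt_irrefl]
      linarith
  -- the optimal Y
  set c : ℝ := (1 - Pgt η / β) / Peq η with hc_def
  have hkey : c * Peq η = 1 - Pgt η / β := div_mul_cancel₀ _ (ne_of_gt hPeq_pos)
  have hc0 : 0 ≤ c := by
    apply div_nonneg _ hPeq_pos.le
    have : Pgt η / β ≤ 1 := (div_le_one hβ0).mpr hq
    linarith
  have hcβ : c ≤ 1 / β := by
    rw [hc_def, div_le_div_iff₀ hPeq_pos hβ0]
    have h1 : (1 - Pgt η / β) * β = β - Pgt η := by field_simp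
    rw [h1]
    linarith
  set Y : Ω → ℝ := fun s => if η < Z s then 1/β else if Z s = η then c else 0 with hY_def
  have hY0 : ∀ s, 0 ≤ Y s := by
    intro s
    rw [hY_def]
    dsimp only
    split
    · positivity
    · split
      · exact hc0
      · exact le_refl 0
  have hY1 : ∀ s, Y s ≤ 1 / β := by
    intro s
    rw [hY_def]
    dsimp only
    split
    · exact le_refl _
    · split
      · exact hcβ
      · positivity
  -- E[Y] = 1
  have hsumY : ∑ s, p s * Y s = 1 := by
    have hterm : ∀ s, p s * Y s =
        (if η < Z s then p s else 0) * (1/β) + (if Z s = η then p s else 0) * c := by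
      intro s
      rw [hY_def]
      rcases lt_trichotomy (Z s) η with h | h | h
      · simp [not_lt.mpr h.le, h.ne]
      · simp [h, lt_irrefl]
      · simp [h, h.ne']
    calc ∑ s, p s * Y s
        = ∑ s, ((if η < Z s then p s else 0) * (1/β) + (if Z s = η then p s else 0) * c) :=
          Finset.sum_congr rfl fun s _ => hterm s
      _ = Pgt η * (1/β) + Peq η * c := by
          rw [Finset.sum_add_distrib, ← Finset.sum_mul, ← Finset.sum_mul]
      _ = Pgt η / β + c * Peq η := by ring
      _ = 1 := by rw [hkey]; ring
  -- E[ZY] computation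
  set G : ℝ := ∑ s, if η < Z s then p s * Z s else 0 with hG_def
  have hZY : ∑ s, p s * (Z s * Y s) = G * (1/β) + η * (c * Peq η) := by
    have hterm : ∀ s, p s * (Z s * Y s) =
        (if η < Z s then p s * Z s else 0) * (1/β) + (if Z s = η then p s else 0) * (η * c) := by
      intro s
      rw [hY_def]
      rcases lt_trichotomy (Z s) η with h | h | h
      · simp [not_lt.mpr h.le, h.ne]
      · simp [h, lt_irrefl]
      · simp [h, h.ne']; ring
    calc ∑ s, p s * (Z s * Y s)
        = ∑ s, ((if η < Z s then p s * Z s else 0) * (1/β)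
            + (if Z s = η then p s else 0) * (η * c)) :=
          Finset.sum_congr rfl fun s _ => hterm s
      _ = G * (1/β) + Peq η * (η * c) := by
          rw [Finset.sum_add_distrib, ← Finset.sum_mul, ← Finset.sum_mul]
      _ = G * (1/β) + η * (c * Peq η) := by ring
  have hmax : ∑ s, p s * max (Z s - η) 0 = G - η * Pgt η := by
    have hterm : ∀ s, p s * max (Z s - η) 0 =
        (if η < Z s then p s * Z s else 0) - η * (if η < Z s then p s else 0) := by
      intro s
      rcases le_or_gt (Z s) η with h | h
      · simp [not_lt.mpr h, max_eq_right (by linarith : Z s - η ≤ 0)]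
      · simp [h, max_eq_left (by linarith : (0:ℝ) ≤ Z s - η)]
        ring
    calc ∑ s, p s * max (Z s - η) 0
        = ∑ s, ((if η < Z s then p s * Z s else 0) - η * (if η < Z s then p s else 0)) :=
          Finset.sum_congr rfl fun s _ => hterm s
      _ = G - η * Pgt η := by
          rw [Finset.sum_sub_distrib, ← Finset.mul_sum]
  -- value equality: E[Z Y*] = η + (1/β) E[(Z-η)^+]
  have hv_eq : ∑ s, p s * (Z s * Y s) = η + (1/β) * ∑ s, p s * max (Z s - η) 0 := by
    rw [hZY, hmax, hkey]
    field_simp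
    ring
  refine ⟨∑ s, p s * (Z s * Y s), ⟨⟨Y, hY0, hY1, hsumY, rfl⟩, ?_⟩, ⟨η, hv_eq⟩, ?_⟩
  · rintro x ⟨Y', h0', h1', hs', hx⟩
    rw [hx, hv_eq]
    exact cvar_weak_duality p (fun s => (hp s).le) β hβ0 Z Y' h0' h1' hs' η
  · rintro x ⟨η', hx⟩
    rw [hx]
    exact cvar_weak_duality p (fun s => (hp s).le) β hβ0 Z Y hY0 hY1 hsumY η'
end

section
/- Let (Ω, F, P) be a probability space with filtration (F_m) generating F. Suppose Y_i^k ∈ L^q are uniformly bounded in L^q norm by c, that E[Y_i^k | F_{m_k}] = E[Y_1^k | F_{m_k}] for all i and k, that m_k → ∞, and that Y_i^k → Y_i^∞ in the weak* topology of L^q (1 < q ≤ ∞, dual to L^p). Then for any W_1,...,W_n ∈ L^p with sum_i W_i = 0, we have sum_i E[Y_i^∞ W_i] = 0; consequently Y_i^∞ = Y_j^∞ almost surely for all i, j. -/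
/-!
Subtracting the conditional expectations `E[W_i | F_{m_k}]` from the test functions does not
change `∑ i, E[Y_i^k W_i]`: they are `F_{m_k}`-measurable, and all `Y_i^k` have the same
conditional expectation given `F_{m_k}`, so `∑ i, E[Y_i^k E[W_i | F_{m_k}]]` equals
`E[Y_1^k E[∑ i, W_i | F_{m_k}]] = 0`. By Hölder and the uniform bound `c`,
`|∑ i, E[Y_i^k W_i]| ≤ c ∑ i, ‖E[W_i | F_{m_k}] - W_i‖_p`, which tends to zero by `L^p` martingale
convergence (approximate `W_i` by a bounded simple function, for which a.e. convergence and
uniform integrability suffice). The weak* limit therefore annihilates every such `(W_i)`, and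
testing with `W_i = 1_A`, `W_j = -1_A` gives `Y_i^∞ = Y_j^∞` a.e.
-/

open MeasureTheory Filter
open scoped ENNReal Topology

section

variable {Ω : Type*} {mΩ : MeasurableSpace Ω} {μ : Measure Ω} {p q : ℝ≥0∞}

theorem abs_integral_mul_le_eLpNorm_mul_eLpNorm [ENNReal.HolderConjugate q p] {f g : Ω → ℝ}
    (hf : MemLp f q μ) (hg : MemLp g p μ) :
    |∫ ω, f ω * g ω ∂μ| ≤ (eLpNorm f q μ).toReal * (eLpNorm g p μ).toReal := by
  have hfg : MemLp (fun ω => f ω * g ω) 1 μ := hg.mul' hf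
  calc |∫ ω, f ω * g ω ∂μ| ≤ ∫ ω, ‖f ω * g ω‖ ∂μ :=
      (Real.norm_eq_abs _).symm.trans_le (norm_integral_le_integral_norm _)
    _ = (eLpNorm (fun ω => f ω * g ω) 1 μ).toReal := by
      rw [integral_norm_eq_lintegral_enorm hfg.1, eLpNorm_one_eq_lintegral_enorm]
    _ ≤ (eLpNorm f q μ).toReal * (eLpNorm g p μ).toReal := by
      rw [← ENNReal.toReal_mul]
      refine ENNReal.toReal_mono (ENNReal.mul_ne_top hf.eLpNorm_ne_top hg.eLpNorm_ne_top) ?_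
      simpa using eLpNorm_le_eLpNorm_mul_eLpNorm'_of_norm hf.1 hg.1 (· * ·) 1
        (.of_forall fun _ => by simp [norm_mul])

theorem unifIntegrable_of_forall_ae_norm_le {ι β : Type*} [NormedAddCommGroup β]
    (hp : 1 ≤ p) (hp' : p ≠ ∞) {f : ι → Ω → β} (hf : ∀ i, AEStronglyMeasurable (f i) μ)
    {R : ℝ} (hR : ∀ i, ∀ᵐ ω ∂μ, ‖f i ω‖ ≤ R) : UnifIntegrable f p μ := by
  refine unifIntegrable_of hp hp' hf fun ε hε => ⟨R.toNNReal + 1, fun i => ?_⟩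
  have hzero : {ω | R.toNNReal + 1 ≤ ‖f i ω‖₊}.indicator (f i) =ᵐ[μ] 0 := by
    filter_upwards [hR i] with ω hω
    refine Set.indicator_of_notMem (fun hmem => ?_) _
    have : (R.toNNReal : ℝ) + 1 ≤ ‖f i ω‖ := by exact_mod_cast hmem
    linarith [Real.le_coe_toNNReal R]
  simp [eLpNorm_congr_ae hzero]

theorem integral_mul_eq_of_forall_sum_eq_zero {ι : Type*} [Fintype ι] [DecidableEq ι]
    {Z : ι → Ω → ℝ} (h : ∀ W : ι → Ω → ℝ, (∀ i, MemLp (W i) p μ) → ∑ i, W i = 0 →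
      ∑ i, ∫ ω, Z i ω * W i ω ∂μ = 0)
    (i j : ι) {f : Ω → ℝ} (hf : MemLp f p μ) :
    ∫ ω, Z i ω * f ω ∂μ = ∫ ω, Z j ω * f ω ∂μ := by
  let a : ι → ℝ := Pi.single i 1 - Pi.single j 1
  have h_test := h (fun l ω => a l * f ω) (fun l => hf.const_mul _)
    (by ext ω; simp [← Finset.sum_mul, a])
  simp_rw [mul_left_comm (Z _ _), integral_const_mul] at h_test
  simpa [a, Pi.single_apply, sub_mul, Finset.sum_sub_distrib, sub_eq_zero] using h_test

theorem ae_eq_of_forall_integral_mul_eq {Y Y' : Ω → ℝ} (hY : Integrable Y μ)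
    (hY' : Integrable Y' μ)
    (h : ∀ f : Ω → ℝ, MemLp f p μ → ∫ ω, Y ω * f ω ∂μ = ∫ ω, Y' ω * f ω ∂μ) :
    Y =ᵐ[μ] Y' := by
  refine hY.ae_eq_of_forall_setIntegral_eq Y Y' hY' fun t ht hμt => ?_
  have h_indicator := h (t.indicator 1) (memLp_indicator_const p ht 1 (.inr hμt.ne))
  simpa [← Set.indicator_mul_right, integral_indicator ht] using h_indicator

variable [IsFiniteMeasure μ]

theorem tendsto_eLpNorm_condExp_sub_of_ae_abs_le (ℱ : Filtration ℕ mΩ)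
    (hgen : ⨆ n, ℱ n = mΩ) (hp : 1 ≤ p) (hp' : p ≠ ∞) {f : Ω → ℝ} (hf : StronglyMeasurable f)
    {R : ℝ} (hR : ∀ᵐ ω ∂μ, |f ω| ≤ R) :
    Tendsto (fun n => eLpNorm (μ[f|ℱ n] - f) p μ) atTop (𝓝 0) := by
  have hfp : MemLp f p μ := MemLp.of_bound hf.aestronglyMeasurable R (by simpa using hR)
  refine tendsto_Lp_finite_of_tendsto_ae hp hp' (fun n => integrable_condExp.1) hfp
    (unifIntegrable_of_forall_ae_norm_le hp hp' (fun n => integrable_condExp.1)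
      fun n => by simpa using ae_bdd_abs_condExp_of_ae_bdd_abs (m := ℱ n) hR) ?_
  exact (hfp.integrable hp).tendsto_ae_condExp (by rwa [hgen])

theorem tendsto_eLpNorm_condExp_sub (ℱ : Filtration ℕ mΩ) (hgen : ⨆ n, ℱ n = mΩ)
    (hp : 1 ≤ p) (hp' : p ≠ ∞) {f : Ω → ℝ} (hf : MemLp f p μ) :
    Tendsto (fun n => eLpNorm (μ[f|ℱ n] - f) p μ) atTop (𝓝 0) := by
  refine ENNReal.tendsto_atTop_zero.2 fun ε hε => ?_
  have hε3 : 0 < ε / 3 := ENNReal.div_pos hε.ne' ENNReal.ofNat_ne_top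
  obtain ⟨g, hfg, hg⟩ := hf.exists_simpleFunc_eLpNorm_sub_lt hp' hε3.ne'
  obtain ⟨C, hC⟩ := g.exists_forall_norm_le
  obtain ⟨N, hN⟩ := ENNReal.tendsto_atTop_zero.1
    (tendsto_eLpNorm_condExp_sub_of_ae_abs_le ℱ hgen hp hp' g.stronglyMeasurable
      (μ := μ) (.of_forall fun ω => by simpa using hC ω)) (ε / 3) hε3
  refine ⟨N, fun n hn => ?_⟩
  have hdecomp : μ[f|ℱ n] - f =ᵐ[μ] μ[f - ⇑g|ℱ n] + (μ[⇑g|ℱ n] - ⇑g) + (⇑g - f) := by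
    filter_upwards [condExp_sub (hf.integrable hp) (hg.integrable hp) (ℱ n)] with ω hω
    simp only [Pi.add_apply, Pi.sub_apply, hω]
    ring
  calc eLpNorm (μ[f|ℱ n] - f) p μ
      = eLpNorm (μ[f - ⇑g|ℱ n] + (μ[⇑g|ℱ n] - ⇑g) + (⇑g - f)) p μ := eLpNorm_congr_ae hdecomp
    _ ≤ eLpNorm (μ[f - ⇑g|ℱ n]) p μ + eLpNorm (μ[⇑g|ℱ n] - ⇑g) p μ + eLpNorm (⇑g - f) p μ := by
      refine (eLpNorm_add_le (by fun_prop) (hg.1.sub hf.1) hp).trans ?_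
      gcongr
      exact eLpNorm_add_le integrable_condExp.1 (integrable_condExp.1.sub hg.1) hp
    _ ≤ ε / 3 + ε / 3 + ε / 3 := by
      gcongr
      · exact (eLpNorm_condExp_le_eLpNorm _ hp).trans hfg.le
      · exact hN n hn
      · exact (eLpNorm_sub_comm (⇑g) f p μ).trans_le hfg.le
    _ = ε := ENNReal.add_thirds ε

theorem integral_mul_eq_integral_mul_of_condExp_ae_eq {m : MeasurableSpace Ω} (hm : m ≤ mΩ)
    {Y Y' g : Ω → ℝ} (hg : StronglyMeasurable[m] g) (hY : Integrable Y μ)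
    (hY' : Integrable Y' μ) (hYg : Integrable (fun ω => Y ω * g ω) μ)
    (hY'g : Integrable (fun ω => Y' ω * g ω) μ) (h : μ[Y|m] =ᵐ[μ] μ[Y'|m]) :
    ∫ ω, Y ω * g ω ∂μ = ∫ ω, Y' ω * g ω ∂μ := by
  have pull_out : ∀ Z : Ω → ℝ, Integrable Z μ → Integrable (fun ω => Z ω * g ω) μ →
      ∫ ω, Z ω * g ω ∂μ = ∫ ω, g ω * μ[Z|m] ω ∂μ := by
    intro Z hZ hZg
    have hcomm : (fun ω => Z ω * g ω) = g * Z := funext fun ω => mul_comm _ _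
    rw [← integral_condExp hm, hcomm]
    rw [hcomm] at hZg
    exact integral_congr_ae (condExp_mul_of_stronglyMeasurable_left hg hZg hZ)
  rw [pull_out Y hY hYg, pull_out Y' hY' hY'g]
  exact integral_congr_ae (h.mono fun ω hω => by simp only [hω])

variable [ENNReal.HolderConjugate q p] {m : MeasurableSpace Ω} {ι : Type*} {s : Finset ι}
  {Y W : ι → Ω → ℝ} {Z : Ω → ℝ}

theorem sum_integral_mul_condExp_eq_zero (hq : 1 ≤ q) (hp : 1 ≤ p) (hm : m ≤ mΩ)
    (hY : ∀ i ∈ s, MemLp (Y i) q μ) (hZ : MemLp Z q μ) (hW : ∀ i ∈ s, MemLp (W i) p μ)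
    (hagree : ∀ i ∈ s, μ[Y i|m] =ᵐ[μ] μ[Z|m]) (hsum : ∑ i ∈ s, W i = 0) :
    ∑ i ∈ s, ∫ ω, Y i ω * μ[W i|m] ω ∂μ = 0 := by
  have hWm : ∀ i ∈ s, MemLp (μ[W i|m]) p μ := fun i hi => (hW i hi).condExp hp
  calc ∑ i ∈ s, ∫ ω, Y i ω * μ[W i|m] ω ∂μ = ∑ i ∈ s, ∫ ω, Z ω * μ[W i|m] ω ∂μ :=
        Finset.sum_congr rfl fun i hi =>
          integral_mul_eq_integral_mul_of_condExp_ae_eq hm stronglyMeasurable_condExp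
            ((hY i hi).integrable hq) (hZ.integrable hq)
            (memLp_one_iff_integrable.1 ((hWm i hi).mul' (hY i hi)))
            (memLp_one_iff_integrable.1 ((hWm i hi).mul' hZ)) (hagree i hi)
    _ = ∫ ω, Z ω * ∑ i ∈ s, μ[W i|m] ω ∂μ := by
      rw [← integral_finsetSum _ fun i hi =>
        memLp_one_iff_integrable.1 ((hWm i hi).mul' hZ)]
      simp_rw [Finset.mul_sum]
    _ = ∫ ω, Z ω * μ[∑ i ∈ s, W i|m] ω ∂μ := by
      refine integral_congr_ae ?_
      filter_upwards [condExp_finsetSum (fun i hi => (hW i hi).integrable hp) m] with ω hω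
      rw [hω, Finset.sum_apply]
    _ = 0 := by simp [hsum]

theorem abs_sum_integral_mul_le (hq : 1 ≤ q) (hp : 1 ≤ p) (hm : m ≤ mΩ)
    (hY : ∀ i ∈ s, MemLp (Y i) q μ) (hZ : MemLp Z q μ) (hW : ∀ i ∈ s, MemLp (W i) p μ)
    (hagree : ∀ i ∈ s, μ[Y i|m] =ᵐ[μ] μ[Z|m]) (hsum : ∑ i ∈ s, W i = 0) :
    |∑ i ∈ s, ∫ ω, Y i ω * W i ω ∂μ| ≤
      ∑ i ∈ s, (eLpNorm (Y i) q μ).toReal * (eLpNorm (μ[W i|m] - W i) p μ).toReal := by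
  have hWm : ∀ i ∈ s, MemLp (μ[W i|m]) p μ := fun i hi => (hW i hi).condExp hp
  have hsplit : ∑ i ∈ s, ∫ ω, Y i ω * W i ω ∂μ =
      ∑ i ∈ s, ∫ ω, Y i ω * (W i - μ[W i|m]) ω ∂μ := by
    rw [← sub_zero (∑ i ∈ s, ∫ ω, Y i ω * W i ω ∂μ),
      ← sum_integral_mul_condExp_eq_zero hq hp hm hY hZ hW hagree hsum,
      ← Finset.sum_sub_distrib]
    refine Finset.sum_congr rfl fun i hi => ?_
    rw [← integral_sub (memLp_one_iff_integrable.1 ((hW i hi).mul' (hY i hi)))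
      (memLp_one_iff_integrable.1 ((hWm i hi).mul' (hY i hi)))]
    simp only [Pi.sub_apply, mul_sub]
  rw [hsplit]
  refine (Finset.abs_sum_le_sum_abs _ _).trans (Finset.sum_le_sum fun i hi => ?_)
  rw [eLpNorm_sub_comm]
  exact abs_integral_mul_le_eLpNorm_mul_eLpNorm (hY i hi) ((hW i hi).sub (hWm i hi))

end

/-- let `(F_m)` be a filtration generating `F`. Suppose the `Y_i^k ∈ L^q`
are uniformly bounded in `L^q` norm by `c`, satisfy `E[Y_i^k | F_{m_k}] = E[Y_1^k | F_{m_k}]`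
for all `i, k`, that `m_k → ∞`, and that `Y_i^k → Y_i^∞` in the weak* topology of `L^q`
(dual to `L^p`). Then `∑ i, E[Y_i^∞ W_i] = 0` whenever `W_i ∈ L^p` with `∑ i W_i = 0`;
consequently `Y_i^∞ = Y_j^∞` a.s. for all `i, j`. -/
theorem weakstar_limit_of_conditionally_agreeing_densities
    {Ω : Type*} {mΩ : MeasurableSpace Ω} (μ : Measure Ω) [IsProbabilityMeasure μ]
    (F : ℕ → MeasurableSpace Ω) (hmono : Monotone F) (hle : ∀ m, F m ≤ mΩ)
    (hgen : (⨆ m, F m) = mΩ)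
    (p q : ℝ≥0∞) (hp : 1 ≤ p) (hp' : p ≠ ∞) (hq : 1 < q) (hpq : 1 / p + 1 / q = 1)
    (n : ℕ) (hn : 2 ≤ n)
    (Y : ℕ → Fin n → Ω → ℝ) (Ylim : Fin n → Ω → ℝ)
    (hYq : ∀ k i, MemLp (Y k i) q μ) (hYlimq : ∀ i, MemLp (Ylim i) q μ)
    (c : ℝ≥0∞) (hc : c ≠ ∞) (hbdd : ∀ k i, eLpNorm (Y k i) q μ ≤ c)
    (m : ℕ → ℕ) (hm : Tendsto m atTop atTop)
    (hagree : ∀ k, ∀ i : Fin n, μ[Y k i|F (m k)] =ᵐ[μ] μ[Y k ⟨0, by omega⟩|F (m k)])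
    (hweak : ∀ i : Fin n, ∀ W : Ω → ℝ, MemLp W p μ →
      Tendsto (fun k => ∫ ω, Y k i ω * W ω ∂μ) atTop (𝓝 (∫ ω, Ylim i ω * W ω ∂μ))) :
    (∀ W : Fin n → Ω → ℝ, (∀ i, MemLp (W i) p μ) → (∑ i, W i) = 0 →
      ∑ i, ∫ ω, Ylim i ω * W i ω ∂μ = 0) ∧
    ∀ i j, Ylim i =ᵐ[μ] Ylim j := by
  have : ENNReal.HolderConjugate q p := ⟨by simpa [one_div, add_comm] using hpq⟩
  let ℱ : Filtration ℕ mΩ := ⟨F, hmono, hle⟩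
  have hsum_zero : ∀ W : Fin n → Ω → ℝ, (∀ i, MemLp (W i) p μ) → (∑ i, W i) = 0 →
      ∑ i, ∫ ω, Ylim i ω * W i ω ∂μ = 0 := by
    intro W hW hsum
    have hbound : ∀ k, ‖∑ i, ∫ ω, Y k i ω * W i ω ∂μ‖ ≤
        ∑ i, c.toReal * (eLpNorm (μ[W i|F (m k)] - W i) p μ).toReal := fun k =>
      (abs_sum_integral_mul_le hq.le hp (hle _) (fun i _ => hYq k i) (hYq k _) (fun i _ => hW i)
        (fun i _ => hagree k i) hsum).trans
        (Finset.sum_le_sum fun i _ => by gcongr; exact hbdd k i)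
    have hbound_tendsto : Tendsto (fun k => ∑ i, c.toReal *
        (eLpNorm (μ[W i|F (m k)] - W i) p μ).toReal) atTop (𝓝 0) := by
      simpa using tendsto_finsetSum _ fun i _ =>
        ((ENNReal.tendsto_toReal ENNReal.zero_ne_top).comp
          ((tendsto_eLpNorm_condExp_sub ℱ hgen hp hp' (hW i)).comp hm)).const_mul c.toReal
    exact tendsto_nhds_unique (tendsto_finsetSum _ fun i _ => hweak i (W i) (hW i))
      (squeeze_zero_norm hbound hbound_tendsto)
  exact ⟨hsum_zero, fun i j => ae_eq_of_forall_integral_mul_eq ((hYlimq i).integrable hq.le)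
    ((hYlimq j).integrable hq.le) fun f hf => integral_mul_eq_of_forall_sum_eq_zero hsum_zero i j hf⟩
end

section
/- Let Ω = [0,1] with Lebesgue measure, and F_1 = {∅, [0,1/2), [1/2,1], Ω}. Let Z_1(ω) = 2ω, Z_2(ω) = 1 − ω, and let agents use CVaR risk sets D_i = {Y : 0 ≤ Y ≤ 1/β_i, E[Y]=1} with 2β_1 + β_2 > 1/2 and max(β_1, β_2) ≤ 1/2. Then the densities Y_1 = (1/β_1)(1_{[1/2−β_1 u, 1/2)} + 1_{[1−β_1(1−u), 1]}) and Y_2 = (1/β_2)(1_{[0, β_2 u)} + 1_{[1/2, 1/2+β_2(1−u)]}) with u = 1/2 − 1/(4(2β_1+β_2)) satisfy: Y_i ∈ D_i, E[Y_1 | F_1] = E[Y_2 | F_1], and the common conditional expectation equals 1 − 1/(2(2β_1+β_2)) on [0,1/2) and 1 + 1/(2(2β_1+β_2)) on [1/2,1]. -/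
/-!
Conditional expectation given the partition `{[0, 1/2), [1/2, 1]}` of `[0, 1]` is the average
over the cell, so it only depends on the integrals over the two halves. Each `Yᵢ` is `1/βᵢ` times
the indicator of a set of measure `βᵢ` placing mass `βᵢ u` in the left half and `βᵢ (1 - u)` in
the right half; hence both densities integrate to `u` and `1 - u` over the halves and have the
common conditional expectation `2u = 1 - 1/(2(2β₁ + β₂))`, resp. `2(1 - u) = 1 + 1/(2(2β₁ + β₂))`.
-/

open MeasureTheory Set Filter

theorem MeasurableSpace.disjoint_or_subset_of_measurableSet_generateFrom {α : Type*}
    {C : Set (Set α)} {X s : Set α} (hC : ∀ t ∈ C, Disjoint t X ∨ X ⊆ t)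
    (hs : MeasurableSet[MeasurableSpace.generateFrom C] s) : Disjoint s X ∨ X ⊆ s := by
  induction s, hs using MeasurableSpace.generateFrom_induction with
  | hC t ht => exact hC t ht
  | empty => exact Or.inl (empty_disjoint X)
  | compl t _ ih =>
    rcases ih with h | h
    · exact Or.inr (subset_compl_iff_disjoint_left.mpr h)
    · exact Or.inl (disjoint_compl_left.mono_right h)
  | iUnion t _ ih =>
    by_cases hX : ∃ n, X ⊆ t n
    · obtain ⟨n, hn⟩ := hX
      exact Or.inr (hn.trans (subset_iUnion t n))
    · push Not at hX
      exact Or.inl (disjoint_iUnion_left.mpr fun n => (ih n).resolve_right (hX n))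

namespace MeasureTheory

variable {α : Type*} [MeasurableSpace α] {μ : Measure α} {A B E s : Set α} {f g : α → ℝ}
  {β : ℝ}

theorem generateFrom_pair_le (hA : MeasurableSet A) (hB : MeasurableSet B) :
    MeasurableSpace.generateFrom {A, B} ≤ ‹MeasurableSpace α› := by
  refine MeasurableSpace.generateFrom_le fun t ht => ?_
  rcases ht with rfl | rfl
  exacts [hA, hB]

def IsCVaRDensity (μ : Measure α) (β : ℝ) (Y : α → ℝ) : Prop :=
  0 ≤ᵐ[μ] Y ∧ (Y ≤ᵐ[μ] fun _ => 1 / β) ∧ ∫ x, Y x ∂μ = 1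

theorem isCVaRDensity_indicator (hβ : 0 < β) (hE : MeasurableSet E) (hμE : μ.real E = β) :
    IsCVaRDensity μ β fun x => 1 / β * E.indicator 1 x := by
  refine ⟨ae_of_all _ fun x => ?_, ae_of_all _ fun x => ?_, ?_⟩
  · exact mul_nonneg (by positivity) (indicator_nonneg (fun _ _ => zero_le_one) x)
  · exact mul_le_of_le_one_right (by positivity) (indicator_le_self' (fun _ _ => zero_le_one) x)
  · rw [integral_const_mul, integral_indicator_one hE, hμE]
    field_simp

theorem setIntegral_const_mul_indicator_one (c : ℝ) (hE : MeasurableSet E) :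
    ∫ x in s, c * E.indicator 1 x ∂μ = c * μ.real (s ∩ E) := by
  rw [integral_const_mul, integral_indicator_one hE, measureReal_restrict_apply hE, inter_comm]

theorem setIntegral_eq_inter_add_inter (hB : MeasurableSet B) (hAB : Disjoint A B)
    (hcover : ∀ᵐ x ∂μ, x ∈ A ∪ B) (hs : MeasurableSet s) (hg : Integrable g μ) :
    ∫ x in s, g x ∂μ = ∫ x in s ∩ A, g x ∂μ + ∫ x in s ∩ B, g x ∂μ := by
  rw [← setIntegral_union (hAB.mono inter_subset_right inter_subset_right) (hs.inter hB)
    hg.integrableOn hg.integrableOn, ← inter_union_distrib_left,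
    ← Measure.restrict_restrict hs, Measure.restrict_eq_self_of_ae_mem hcover]

theorem setIntegral_eq_of_generateFrom_pair (hA : MeasurableSet A) (hB : MeasurableSet B)
    (hAB : Disjoint A B) (hcover : ∀ᵐ x ∂μ, x ∈ A ∪ B) (hf : Integrable f μ)
    (hg : Integrable g μ) (hfgA : ∫ x in A, f x ∂μ = ∫ x in A, g x ∂μ)
    (hfgB : ∫ x in B, f x ∂μ = ∫ x in B, g x ∂μ)
    (hs : MeasurableSet[MeasurableSpace.generateFrom {A, B}] s) :
    ∫ x in s, f x ∂μ = ∫ x in s, g x ∂μ := by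
  have hs₀ : MeasurableSet s := generateFrom_pair_le hA hB s hs
  -- the cells are atoms of `σ(A, B)`: a measurable `s` meets each of them in `∅` or in the cell
  have cell : ∀ X, (∫ x in X, f x ∂μ = ∫ x in X, g x ∂μ) → (Disjoint A X ∨ X ⊆ A) →
      (Disjoint B X ∨ X ⊆ B) → ∫ x in s ∩ X, f x ∂μ = ∫ x in s ∩ X, g x ∂μ := by
    intro X hfgX hAX hBX
    have hX : ∀ t ∈ ({A, B} : Set (Set α)), Disjoint t X ∨ X ⊆ t := by
      rintro t (rfl | rfl)
      exacts [hAX, hBX]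
    rcases MeasurableSpace.disjoint_or_subset_of_measurableSet_generateFrom hX hs with h | h
    · simp [h.inter_eq]
    · rwa [inter_eq_right.mpr h]
  rw [setIntegral_eq_inter_add_inter hB hAB hcover hs₀ hf,
    setIntegral_eq_inter_add_inter hB hAB hcover hs₀ hg,
    cell A hfgA (Or.inr subset_rfl) (Or.inl hAB.symm),
    cell B hfgB (Or.inl hAB) (Or.inr subset_rfl)]

-- the junk value `a / 0 * 0 = 0` is harmless: `μ X = 0` forces the integral to vanish
theorem setIntegral_div_measureReal_mul [IsFiniteMeasure μ] (X : Set α) :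
    (∫ x in X, g x ∂μ) / μ.real X * μ.real X = ∫ x in X, g x ∂μ :=
  div_mul_cancel_of_imp fun h =>
    setIntegral_measure_zero g ((measureReal_eq_zero_iff (measure_ne_top μ X)).mp h)

theorem condExp_generateFrom_pair_ae_eq [IsFiniteMeasure μ] [DecidablePred (· ∈ A)]
    (hA : MeasurableSet A) (hB : MeasurableSet B) (hAB : Disjoint A B) (hcover : ∀ᵐ x ∂μ, x ∈ A ∪ B)
    (hg : Integrable g μ) :
    μ[g|MeasurableSpace.generateFrom {A, B}] =ᵐ[μ] fun x =>
      if x ∈ A then (∫ y in A, g y ∂μ) / μ.real A else (∫ y in B, g y ∂μ) / μ.real B := by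
  set a := (∫ y in A, g y ∂μ) / μ.real A
  set b := (∫ y in B, g y ∂μ) / μ.real B
  have hA' : MeasurableSet[MeasurableSpace.generateFrom {A, B}] A :=
    MeasurableSpace.measurableSet_generateFrom (mem_insert A {B})
  have hint : Integrable (fun x => if x ∈ A then a else b) μ :=
    Integrable.piecewise hA (integrable_const a).integrableOn (integrable_const b).integrableOn
  have hcellA : ∫ x in A, (if x ∈ A then a else b) ∂μ = ∫ x in A, g x ∂μ := by
    rw [setIntegral_congr_fun hA fun x hx => if_pos hx, setIntegral_const, smul_eq_mul,
      mul_comm, setIntegral_div_measureReal_mul]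
  have hcellB : ∫ x in B, (if x ∈ A then a else b) ∂μ = ∫ x in B, g x ∂μ := by
    rw [setIntegral_congr_fun hB fun x hx => if_neg (hAB.notMem_of_mem_right hx),
      setIntegral_const, smul_eq_mul, mul_comm, setIntegral_div_measureReal_mul]
  refine (ae_eq_condExp_of_forall_setIntegral_eq (generateFrom_pair_le hA hB) hg
    (fun s _ _ => hint.integrableOn) (fun s hs _ => ?_) ?_).symm
  · exact setIntegral_eq_of_generateFrom_pair hA hB hAB hcover hint hg hcellA hcellB hs
  · exact (StronglyMeasurable.ite hA' stronglyMeasurable_const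
      stronglyMeasurable_const).aestronglyMeasurable

end MeasureTheory

section UnitInterval

local notation "ℙ" => volume.restrict (Icc (0 : ℝ) 1)
local notation "𝓕₁" => MeasurableSpace.generateFrom {Ico (0 : ℝ) (1 / 2), Icc (1 / 2 : ℝ) 1}

theorem disjoint_lowerHalf_upperHalf : Disjoint (Ico (0 : ℝ) (1 / 2)) (Icc (1 / 2) 1) :=
  disjoint_left.mpr fun _ hx hx' => hx.2.not_ge hx'.1

theorem ae_mem_lowerHalf_union_upperHalf :
    ∀ᵐ x ∂ℙ, x ∈ Ico (0 : ℝ) (1 / 2) ∪ Icc (1 / 2) 1 := by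
  rw [Ico_union_Icc_eq_Icc (by norm_num) (by norm_num)]
  exact ae_restrict_mem measurableSet_Icc

theorem lowerHalf_subset_Icc : Ico (0 : ℝ) (1 / 2) ⊆ Icc 0 1 :=
  Ico_subset_Icc_self.trans (Icc_subset_Icc le_rfl (by norm_num))

theorem upperHalf_subset_Icc : Icc (1 / 2 : ℝ) 1 ⊆ Icc 0 1 :=
  Icc_subset_Icc (by norm_num) le_rfl

theorem measureReal_restrict_Icc_of_subset {I : Set ℝ} (hI : MeasurableSet I)
    (hsub : I ⊆ Icc 0 1) : (ℙ).real I = volume.real I := by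
  rw [measureReal_restrict_apply hI, inter_eq_left.mpr hsub]

theorem measureReal_lowerHalf : (ℙ).real (Ico (0 : ℝ) (1 / 2)) = 1 / 2 := by
  rw [measureReal_restrict_Icc_of_subset measurableSet_Ico lowerHalf_subset_Icc,
    Real.volume_real_Ico_of_le (by norm_num)]
  norm_num

theorem measureReal_upperHalf : (ℙ).real (Icc (1 / 2 : ℝ) 1) = 1 / 2 := by
  rw [measureReal_restrict_Icc_of_subset measurableSet_Icc upperHalf_subset_Icc,
    Real.volume_real_Icc_of_le (by norm_num)]
  norm_num

theorem isCVaRDensity_and_condExp_of_subset_halves {β u : ℝ} (hβ : 0 < β) {I J : Set ℝ}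
    (hI : MeasurableSet I) (hJ : MeasurableSet J) (hIA : I ⊆ Ico 0 (1 / 2))
    (hJB : J ⊆ Icc (1 / 2) 1) (hIvol : volume.real I = β * u)
    (hJvol : volume.real J = β * (1 - u)) :
    IsCVaRDensity ℙ β
        (fun ω => 1 / β * (I.indicator (fun _ => 1) ω + J.indicator (fun _ => 1) ω)) ∧
      ℙ[fun ω => 1 / β * (I.indicator (fun _ => 1) ω + J.indicator (fun _ => 1) ω)|𝓕₁] =ᵐ[ℙ]
      fun ω => if ω ∈ Ico (0 : ℝ) (1 / 2) then 2 * u else 2 * (1 - u) := by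
  have hIJ : Disjoint I J := disjoint_lowerHalf_upperHalf.mono hIA hJB
  have hY : (fun ω => 1 / β * (I.indicator (fun _ => 1) ω + J.indicator (fun _ => 1) ω)) =
      fun ω => 1 / β * (I ∪ J).indicator 1 ω := by
    simp only [indicator_union_of_disjoint hIJ]
    rfl
  have hIℙ : (ℙ).real I = β * u := by
    rw [measureReal_restrict_Icc_of_subset hI (hIA.trans lowerHalf_subset_Icc), hIvol]
  have hJℙ : (ℙ).real J = β * (1 - u) := by
    rw [measureReal_restrict_Icc_of_subset hJ (hJB.trans upperHalf_subset_Icc), hJvol]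
  have hA : Ico (0 : ℝ) (1 / 2) ∩ (I ∪ J) = I := by
    rw [inter_union_distrib_left, inter_eq_right.mpr hIA,
      (disjoint_lowerHalf_upperHalf.mono_right hJB).inter_eq, union_empty]
  have hB : Icc (1 / 2 : ℝ) 1 ∩ (I ∪ J) = J := by
    rw [inter_union_distrib_left, inter_eq_right.mpr hJB,
      (disjoint_lowerHalf_upperHalf.symm.mono_right hIA).inter_eq, empty_union]
  rw [hY]
  refine ⟨isCVaRDensity_indicator hβ (hI.union hJ)
    (by rw [measureReal_union hIJ hJ, hIℙ, hJℙ]; ring), ?_⟩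
  refine (condExp_generateFrom_pair_ae_eq measurableSet_Ico measurableSet_Icc
    disjoint_lowerHalf_upperHalf ae_mem_lowerHalf_union_upperHalf
    (((integrable_const 1).indicator (hI.union hJ)).const_mul _)).trans (EventuallyEq.of_eq ?_)
  rw [setIntegral_const_mul_indicator_one _ (hI.union hJ),
    setIntegral_const_mul_indicator_one _ (hI.union hJ), hA, hB, hIℙ, hJℙ, measureReal_lowerHalf,
    measureReal_upperHalf]
  funext ω
  split_ifs <;> field_simp

end UnitInterval

/-- explicit equilibrium densities for the two-agent example on
`Ω = [0,1]` with the four-element σ-algebra `F₁` generated by `[0,1/2)` and `[1/2,1]`.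
With `2β₁ + β₂ > 1/2`, `max β₁ β₂ ≤ 1/2` and `u = 1/2 − 1/(4(2β₁+β₂))`, the densities
`Y₁ = (1/β₁)(1_{[1/2−β₁u,1/2)} + 1_{[1−β₁(1−u),1]})` and
`Y₂ = (1/β₂)(1_{[0,β₂u)} + 1_{[1/2,1/2+β₂(1−u)]})` belong to the respective CVaR risk
sets, have equal conditional expectations given `F₁`, and the common conditional
expectation equals `1 − 1/(2(2β₁+β₂))` on `[0,1/2)` and `1 + 1/(2(2β₁+β₂))` on
`[1/2,1]`. -/
theorem two_agent_interval_example
    (β₁ β₂ : ℝ) (hβ₁ : β₁ ∈ Set.Ioc (0 : ℝ) 1) (hβ₂ : β₂ ∈ Set.Ioc (0 : ℝ) 1)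
    (hlow : 1 / 2 < 2 * β₁ + β₂) (hhigh : max β₁ β₂ ≤ 1 / 2)
    (μ : Measure ℝ) (hμ : μ = volume.restrict (Set.Icc (0 : ℝ) 1))
    (G : MeasurableSpace ℝ)
    (hGdef : G = MeasurableSpace.generateFrom
      {Set.Ico (0 : ℝ) (1 / 2), Set.Icc (1 / 2 : ℝ) 1})
    (u : ℝ) (hu : u = 1 / 2 - 1 / (4 * (2 * β₁ + β₂)))
    (Y₁ Y₂ : ℝ → ℝ)
    (hY₁def : Y₁ = fun ω => (1 / β₁) *
      ((Set.Ico (1 / 2 - β₁ * u) (1 / 2 : ℝ)).indicator (fun _ => (1 : ℝ)) ω +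
       (Set.Icc (1 - β₁ * (1 - u)) (1 : ℝ)).indicator (fun _ => (1 : ℝ)) ω))
    (hY₂def : Y₂ = fun ω => (1 / β₂) *
      ((Set.Ico (0 : ℝ) (β₂ * u)).indicator (fun _ => (1 : ℝ)) ω +
       (Set.Icc (1 / 2 : ℝ) (1 / 2 + β₂ * (1 - u))).indicator (fun _ => (1 : ℝ)) ω)) :
    (0 ≤ᵐ[μ] Y₁ ∧ (Y₁ ≤ᵐ[μ] fun _ => 1 / β₁) ∧ ∫ ω, Y₁ ω ∂μ = 1) ∧
    (0 ≤ᵐ[μ] Y₂ ∧ (Y₂ ≤ᵐ[μ] fun _ => 1 / β₂) ∧ ∫ ω, Y₂ ω ∂μ = 1) ∧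
    μ[Y₁|G] =ᵐ[μ] μ[Y₂|G] ∧
    μ[Y₁|G] =ᵐ[μ] fun ω =>
      if ω ∈ Set.Ico (0 : ℝ) (1 / 2) then 1 - 1 / (2 * (2 * β₁ + β₂))
      else 1 + 1 / (2 * (2 * β₁ + β₂)) := by
  subst hGdef hμ hY₁def hY₂def
  obtain ⟨hβ₁₀, -⟩ := hβ₁
  obtain ⟨hβ₂₀, -⟩ := hβ₂
  have hβ₁' : β₁ ≤ 1 / 2 := (le_max_left _ _).trans hhigh
  have hβ₂' : β₂ ≤ 1 / 2 := (le_max_right _ _).trans hhigh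
  have hS₀ : 0 < 1 / (4 * (2 * β₁ + β₂)) := by positivity
  have hS₁ : 1 / (4 * (2 * β₁ + β₂)) < 1 / 2 := by
    rw [div_lt_div_iff₀ (by positivity) (by norm_num)]
    linarith
  have hu₀ : 0 < u := by linarith
  have hu₁ : u < 1 / 2 := by linarith
  obtain ⟨hY₁, hcond₁⟩ := isCVaRDensity_and_condExp_of_subset_halves (u := u)
    (I := Ico (1 / 2 - β₁ * u) (1 / 2)) (J := Icc (1 - β₁ * (1 - u)) 1) hβ₁₀
    measurableSet_Ico measurableSet_Icc (Ico_subset_Ico (by nlinarith) le_rfl)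
    (Icc_subset_Icc (by nlinarith) le_rfl)
    (by rw [Real.volume_real_Ico_of_le (by nlinarith)]; ring)
    (by rw [Real.volume_real_Icc_of_le (by nlinarith)]; ring)
  obtain ⟨hY₂, hcond₂⟩ := isCVaRDensity_and_condExp_of_subset_halves (u := u)
    (I := Ico 0 (β₂ * u)) (J := Icc (1 / 2) (1 / 2 + β₂ * (1 - u))) hβ₂₀
    measurableSet_Ico measurableSet_Icc (Ico_subset_Ico le_rfl (by nlinarith))
    (Icc_subset_Icc le_rfl (by nlinarith))
    (by rw [Real.volume_real_Ico_of_le (by nlinarith)]; ring)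
    (by rw [Real.volume_real_Icc_of_le (by nlinarith)]; ring)
  have hlowerValue : 2 * u = 1 - 1 / (2 * (2 * β₁ + β₂)) := by rw [hu]; field_simp; ring
  have hupperValue : 2 * (1 - u) = 1 + 1 / (2 * (2 * β₁ + β₂)) := by rw [hu]; field_simp; ring
  refine ⟨hY₁, hY₂, hcond₁.trans hcond₂.symm, ?_⟩
  rwa [hlowerValue, hupperValue] at hcond₁
end

section
/- Let V be a real vector space, D a compact convex subset (in some Hausdorff topology) of the algebraic dual V*, ⟨·,·⟩ : V × V* → R bilinear with Y ↦ ⟨x, Y⟩ continuous on D for each x ∈ V, S ⊆ V a linear subspace, and Z ∈ V. Suppose inf_{W∈S} max_{Y∈D} ⟨Z−W, Y⟩ is finite. Then inf_{W∈S} max_{Y∈D} ⟨Z−W, Y⟩ = max{⟨Z, Y⟩ : Y ∈ D ∩ S^⊥}, where S^⊥ = {Y : ⟨W, Y⟩ = 0 for all W ∈ S}. -/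
lemma aux_finite_sep {V : Type*} [AddCommGroup V] [Module ℝ V]
    [TopologicalSpace (Module.Dual ℝ V)]
    (hcont : ∀ x : V, Continuous fun Y : Module.Dual ℝ V => Y x)
    (D : Set (Module.Dual ℝ V)) (hDcomp : IsCompact D) (hDconv : Convex ℝ D)
    (hDne : D.Nonempty)
    (S : Submodule ℝ V) (Z : V) (m : ℝ)
    (hm : ∀ W ∈ S, m ≤ sSup ((fun Y : Module.Dual ℝ V => Y (Z - W)) '' D))
    (u : Finset V) (hu : ∀ W ∈ u, W ∈ S) :
    ∃ Y ∈ D, ∀ W ∈ u, m ≤ Y (Z - W) := by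
  by_contra hcon
  push_neg at hcon
  classical
  set L : Module.Dual ℝ V →ₗ[ℝ] (↥u → ℝ) :=
    LinearMap.pi (fun W : ↥u => LinearMap.applyₗ (Z - (W : V))) with hL
  have hLapply : ∀ (Y : Module.Dual ℝ V) (W : ↥u), L Y W = Y (Z - (W : V)) := fun _ _ => rfl
  set K : Set (↥u → ℝ) := L '' D with hK
  have hKconv : Convex ℝ K := hDconv.linear_image L
  have hLcont : Continuous fun Y : Module.Dual ℝ V => L Y := by
    apply continuous_pi
    intro W
    exact hcont (Z - (W : V))
  have hKcomp : IsCompact K := hDcomp.image hLcont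
  set Q : Set (↥u → ℝ) := {x | ∀ W : ↥u, m ≤ x W} with hQ
  have hQclosed : IsClosed Q := by
    have : Q = ⋂ W : ↥u, (fun x : ↥u → ℝ => x W) ⁻¹' Set.Ici m := by
      ext x; simp [hQ]
    rw [this]
    exact isClosed_iInter fun W => (isClosed_Ici).preimage (continuous_apply W)
  have hQconv : Convex ℝ Q := by
    intro x hx y hy a b ha hb hab
    intro W
    have h1 : m ≤ x W := hx W
    have h2 : m ≤ y W := hy W
    simp only [Pi.add_apply, Pi.smul_apply, smul_eq_mul]
    have h3 : a * m + b * m = m := by rw [← add_mul, hab, one_mul]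
    have h4 := mul_le_mul_of_nonneg_left h1 ha
    have h5 := mul_le_mul_of_nonneg_left h2 hb
    linarith
  have hdisj : Disjoint K Q := by
    rw [Set.disjoint_left]
    rintro x ⟨Y, hY, rfl⟩ hxQ
    obtain ⟨W, hWu, hlt⟩ := hcon Y hY
    exact absurd (hxQ ⟨W, hWu⟩) (not_le.mpr hlt)
  obtain ⟨f, a, b, hfa, hab, hfb⟩ :=
    geometric_hahn_banach_compact_closed hKconv hKcomp hQconv hQclosed hdisj
  set e : ↥u → (↥u → ℝ) := fun W => fun j => if W = j then (1 : ℝ) else 0 with he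
  set lam : ↥u → ℝ := fun W => f (e W) with hlam
  have hfexp : ∀ x : ↥u → ℝ, f x = ∑ W : ↥u, x W * lam W := by
    intro x
    conv_lhs => rw [pi_eq_sum_univ x]
    rw [map_sum]
    refine Finset.sum_congr rfl fun W _ => ?_
    rw [map_smul, smul_eq_mul]
  have hconstQ : (fun _ : ↥u => m) ∈ Q := fun W => le_refl m
  have hbm : b < f (fun _ => m) := hfb _ hconstQ
  have hlam_nonneg : ∀ W : ↥u, 0 ≤ lam W := by
    intro W
    by_contra hneg
    push_neg at hneg
    set t : ℝ := (b - f (fun _ => m)) / lam W with ht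
    have htpos : 0 < t := div_pos_of_neg_of_neg (by linarith) hneg
    have hqQ : ((fun _ : ↥u => m) + t • e W) ∈ Q := by
      intro W'
      simp only [Pi.add_apply, Pi.smul_apply, smul_eq_mul, he]
      rcases eq_or_ne W W' with rfl | hne
      · simp; linarith
      · rw [if_neg hne]; simp
    have hval := hfb _ hqQ
    have hfe : f (e W) = lam W := rfl
    rw [map_add, map_smul, smul_eq_mul, hfe, ht,
      div_mul_cancel₀ _ (ne_of_lt hneg)] at hval
    linarith
  set σ : ℝ := ∑ W : ↥u, lam W with hσ
  have hσ_nonneg : 0 ≤ σ := Finset.sum_nonneg fun W _ => hlam_nonneg W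
  have hσ_pos : 0 < σ := by
    rcases lt_or_eq_of_le hσ_nonneg with h | h
    · exact h
    · exfalso
      have hall : ∀ W : ↥u, lam W = 0 := by
        intro W
        exact (Finset.sum_eq_zero_iff_of_nonneg (fun W _ => hlam_nonneg W)).mp h.symm W
          (Finset.mem_univ W)
      have hf0 : ∀ x : ↥u → ℝ, f x = 0 := by
        intro x; rw [hfexp]; simp [hall]
      obtain ⟨Y0, hY0⟩ := hDne
      have h1 : f (L Y0) < a := hfa _ ⟨Y0, hY0, rfl⟩
      rw [hf0] at h1
      have h2 := hbm
      rw [hf0] at h2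
      linarith
  have hfconst : f (fun _ : ↥u => m) = m * σ := by
    rw [hfexp, hσ, Finset.mul_sum]
  set Wstar : V := σ⁻¹ • ∑ W : ↥u, lam W • (W : V) with hWstar
  have hWstarS : Wstar ∈ S := by
    apply Submodule.smul_mem
    apply Submodule.sum_mem
    intro W _
    exact Submodule.smul_mem _ _ (hu _ W.2)
  have hkey : ∀ Y ∈ D, Y (Z - Wstar) < m := by
    intro Y hY
    have hfY : f (L Y) < a := hfa _ ⟨Y, hY, rfl⟩
    have hflt : f (L Y) < m * σ := by rw [← hfconst]; linarith
    have hfLY : f (L Y) = Y Z * σ - ∑ W : ↥u, lam W * Y (W : V) := by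
      rw [hfexp, hσ, Finset.mul_sum, ← Finset.sum_sub_distrib]
      refine Finset.sum_congr rfl fun W _ => ?_
      rw [hLapply, map_sub]
      ring
    have hsum : Y (∑ W : ↥u, lam W • (W : V)) = ∑ W : ↥u, lam W * Y (W : V) := by
      rw [map_sum]
      exact Finset.sum_congr rfl fun W _ => by rw [map_smul, smul_eq_mul]
    have hYW : Y (Z - Wstar) = σ⁻¹ * f (L Y) := by
      rw [map_sub, hWstar, map_smul, smul_eq_mul, hsum, hfLY]
      field_simp
      try ring
    rw [hYW]
    calc σ⁻¹ * f (L Y) < σ⁻¹ * (m * σ) := by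
          exact mul_lt_mul_of_pos_left hflt (inv_pos.mpr hσ_pos)
      _ = m := by field_simp
  obtain ⟨Y1, hY1, hmax⟩ := hDcomp.exists_isMaxOn hDne ((hcont (Z - Wstar)).continuousOn)
  have hsup : sSup ((fun Y : Module.Dual ℝ V => Y (Z - Wstar)) '' D) = Y1 (Z - Wstar) := by
    apply IsGreatest.csSup_eq
    exact ⟨⟨Y1, hY1, rfl⟩, by rintro y ⟨Y, hY, rfl⟩; exact hmax hY⟩
  have hle := hm Wstar hWstarS
  rw [hsup] at hle
  exact absurd hle (not_le.mpr (hkey Y1 hY1))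

/-- minimax/annihilator reduction, Fan: let `V` be a real vector space
and equip its algebraic dual with a Hausdorff topology making every evaluation
`Y ↦ Y x` continuous. Let `D` be a nonempty compact convex set of dual elements, `S` a
linear subspace of `V`, and `Z ∈ V`. If `inf_{W ∈ S} max_{Y ∈ D} ⟨Z − W, Y⟩` is finite
(bounded below), then it equals `max {⟨Z, Y⟩ : Y ∈ D ∩ S^⊥}`, the maximum being
attained, where `S^⊥ = {Y : ⟨W, Y⟩ = 0 for all W ∈ S}`. -/
theorem minimax_annihilator_reduction
    {V : Type*} [AddCommGroup V] [Module ℝ V]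
    [TopologicalSpace (Module.Dual ℝ V)] [T2Space (Module.Dual ℝ V)]
    (hcont : ∀ x : V, Continuous fun Y : Module.Dual ℝ V => Y x)
    (D : Set (Module.Dual ℝ V)) (hDcomp : IsCompact D) (hDconv : Convex ℝ D)
    (hDne : D.Nonempty)
    (S : Submodule ℝ V) (Z : V)
    (hfin : BddBelow {x : ℝ | ∃ W ∈ S,
      x = sSup {y : ℝ | ∃ Y ∈ D, y = Y (Z - W)}}) :
    IsGreatest {y : ℝ | ∃ Y ∈ D, (∀ W ∈ S, Y W = 0) ∧ y = Y Z}
      (sInf {x : ℝ | ∃ W ∈ S, x = sSup {y : ℝ | ∃ Y ∈ D, y = Y (Z - W)}}) := by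
  classical
  have himg : ∀ x : V, {y : ℝ | ∃ Y ∈ D, y = Y x} = (fun Y : Module.Dual ℝ V => Y x) '' D := by
    intro x
    ext y
    constructor
    · rintro ⟨Y, hY, rfl⟩; exact ⟨Y, hY, rfl⟩
    · rintro ⟨Y, hY, rfl⟩; exact ⟨Y, hY, rfl⟩
  have hgreat : ∀ x : V, IsGreatest ((fun Y : Module.Dual ℝ V => Y x) '' D)
      (sSup ((fun Y : Module.Dual ℝ V => Y x) '' D)) := by
    intro x
    obtain ⟨Y1, hY1, hmax⟩ := hDcomp.exists_isMaxOn hDne ((hcont x).continuousOn)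
    have : IsGreatest ((fun Y : Module.Dual ℝ V => Y x) '' D) (Y1 x) :=
      ⟨⟨Y1, hY1, rfl⟩, by rintro y ⟨Y, hY, rfl⟩; exact hmax hY⟩
    rwa [this.csSup_eq]
  set A : Set ℝ := {x : ℝ | ∃ W ∈ S, x = sSup {y : ℝ | ∃ Y ∈ D, y = Y (Z - W)}} with hA
  have hAim : A = {x : ℝ | ∃ W ∈ S, x = sSup ((fun Y : Module.Dual ℝ V => Y (Z - W)) '' D)} := by
    simp only [hA, himg]
  set m : ℝ := sInf A with hmdef
  have hAne : A.Nonempty := ⟨_, 0, S.zero_mem, rfl⟩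
  have hm : ∀ W ∈ S, m ≤ sSup ((fun Y : Module.Dual ℝ V => Y (Z - W)) '' D) := by
    intro W hW
    apply csInf_le hfin
    exact ⟨W, hW, by rw [himg]⟩
  -- family of closed sets
  set t : ↥S → Set (Module.Dual ℝ V) := fun W => {Y | m ≤ Y (Z - (W : V))} with ht
  have htc : ∀ W : ↥S, IsClosed (t W) := fun W =>
    (isClosed_Ici).preimage (hcont (Z - (W : V)))
  have hst : ∀ u : Finset ↥S, (D ∩ ⋂ W ∈ u, t W).Nonempty := by
    intro u
    obtain ⟨Y, hYD, hY⟩ := aux_finite_sep hcont D hDcomp hDconv hDne S Z m hm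
      (u.image Subtype.val) (by
        intro W hW
        obtain ⟨W', _, rfl⟩ := Finset.mem_image.mp hW
        exact W'.2)
    refine ⟨Y, hYD, ?_⟩
    simp only [Set.mem_iInter]
    intro W hW
    exact hY _ (Finset.mem_image_of_mem _ hW)
  obtain ⟨Y₀, hY₀D, hY₀t⟩ := hDcomp.inter_iInter_nonempty t htc hst
  simp only [Set.mem_iInter] at hY₀t
  have hkey : ∀ W ∈ S, m ≤ Y₀ (Z - W) := fun W hW => hY₀t ⟨W, hW⟩
  have hperp : ∀ W ∈ S, Y₀ W = 0 := by
    intro W hW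
    by_contra hne
    have h1 := hkey _ (S.smul_mem ((Y₀ Z - m + 1) / Y₀ W) hW)
    rw [map_sub, map_smul, smul_eq_mul, div_mul_cancel₀ _ hne] at h1
    linarith
  have hmZ : m ≤ Y₀ Z := by
    have := hkey 0 S.zero_mem
    rwa [sub_zero] at this
  have hub : ∀ Y ∈ D, (∀ W ∈ S, Y W = 0) → Y Z ≤ m := by
    intro Y hYD hYperp
    apply le_csInf hAne
    rintro x ⟨W, hW, rfl⟩
    rw [himg]
    have : Y Z = Y (Z - W) := by rw [map_sub, hYperp W hW, sub_zero]
    rw [this]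
    exact (hgreat (Z - W)).2 ⟨Y, hYD, rfl⟩
  have hY₀Z : Y₀ Z = m := le_antisymm (hub Y₀ hY₀D hperp) hmZ
  constructor
  · exact ⟨Y₀, hY₀D, hperp, hY₀Z.symm⟩
  · rintro y ⟨Y, hYD, hYperp, rfl⟩
    exact hub Y hYD hYperp
end
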